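/- arXiv:2208.04777 — 2 statements merged into one kernel-verified Lean document; each statement's English description precedes it below -/
import Mathlib

section
/- Let 𝒵 be a finite nonempty set, M ≥ 1, d ≥ 1, let z : Fin M → 𝒵 with empirical distribution H_z, and let h : (Fin d → 𝒵) → Fin d → ℝ be any function. Then for every j ∈ Fin M: (1/M^{d-1}) · Σ_{k ∈ Fin d} Σ_{x : Fin d → Fin M} 1{x k = j} · h(z ∘ x)(k) = Σ_{z̄ : Fin d → 𝒵} Σ_{u ∈ Fin d} 1{z̄ u = z j} · (∏_{i ∈ Fin d, i ≠ u} H_z(z̄ i)) · h(z̄)(u), and this quantity also equals (1/H_z(z j)) · Σ_{z̄ : Fin d → 𝒵} Σ_{u ∈ Fin d} 1{z̄ u = z j} · (∏_{i ∈ Fin d} H_z(z̄ i)) · h(z̄)(u), where H_z(z j) ≥ 1/M > 0 automatically. -/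
/-!
Group the configurations `x : Fin d → Fin M` according to the state profile `z ∘ x`. Those with
`z ∘ x = z̄` and `x k = j` form a product set, of size `1{z̄ k = z j} · ∏_{i ≠ k} M · H_z(z̄ i)`;
dividing by `M^(d-1)` gives the first identity. The second holds because, whenever
`z̄ u = z j`, the full product `∏_i H_z(z̄ i)` is `H_z(z j)` times the product over `i ≠ u`.
-/

open Finset

section FiberCounting

variable {ι α β : Type*} [Fintype ι] [DecidableEq ι] [Fintype α] [DecidableEq α] [DecidableEq β]

theorem card_comp_eq_and_apply_eq (z : α → β) (zbar : ι → β) (k : ι) (a : α) :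
    #{x : ι → α | z ∘ x = zbar ∧ x k = a}
      = (if zbar k = z a then 1 else 0) * ∏ i ∈ univ.erase k, #{b | z b = zbar i} := by
  have hpi : ({x : ι → α | z ∘ x = zbar ∧ x k = a} : Finset (ι → α))
      = Fintype.piFinset (Function.update (fun i => ({b | z b = zbar i} : Finset α)) k
          (if zbar k = z a then {a} else ∅)) := by
    ext x
    simp only [mem_filter, mem_univ, true_and, Fintype.mem_piFinset, funext_iff,
      Function.comp_apply, Function.update_apply]
    grind
  rw [hpi, Fintype.card_piFinset, ← mul_prod_erase univ _ (mem_univ k), Function.update_self]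
  congr 1
  · split_ifs <;> simp
  · exact prod_congr rfl fun i hi => by rw [Function.update_of_ne (ne_of_mem_erase hi)]

theorem sum_ite_apply_eq_mul_comp [Fintype β] {R : Type*} [CommSemiring R] (z : α → β) (k : ι)
    (a : α) (g : (ι → β) → R) :
    ∑ x : ι → α, (if x k = a then 1 else 0) * g (z ∘ x)
      = ∑ zbar : ι → β, (if zbar k = z a then 1 else 0) *
          (∏ i ∈ univ.erase k, (#{b | z b = zbar i} : R)) * g zbar := by
  rw [← sum_fiberwise univ (z ∘ ·)]
  refine sum_congr rfl fun zbar _ => ?_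
  calc ∑ x with z ∘ x = zbar, (if x k = a then 1 else 0) * g (z ∘ x)
      = (∑ x with z ∘ x = zbar, if x k = a then (1 : R) else 0) * g zbar := by
        rw [sum_mul]
        exact sum_congr rfl fun x hx => by rw [(mem_filter.mp hx).2]
    _ = _ := by
        rw [sum_boole, filter_filter, card_comp_eq_and_apply_eq]
        push_cast
        rfl

end FiberCounting

theorem ite_mul_prod_eq_mul_ite_mul_prod_erase {ι β R : Type*} [Fintype ι] [DecidableEq ι]
    [DecidableEq β] [CommSemiring R] (f : β → R) (zbar : ι → β) (u : ι) (c : β) :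
    (if zbar u = c then 1 else 0) * ∏ i, f (zbar i)
      = f c * ((if zbar u = c then 1 else 0) * ∏ i ∈ univ.erase u, f (zbar i)) := by
  split_ifs with hu
  · rw [← mul_prod_erase univ _ (mem_univ u), hu]
    ring
  · simp

section EmpiricalDistribution

variable {𝒵 : Type*} [DecidableEq 𝒵] {M : ℕ}

noncomputable def empiricalDist (z : Fin M → 𝒵) (s : 𝒵) : ℝ :=
  #{j | z j = s} / M

theorem one_div_le_empiricalDist_self (z : Fin M → 𝒵) (j : Fin M) :
    1 / (M : ℝ) ≤ empiricalDist z (z j) := by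
  unfold empiricalDist
  gcongr
  exact_mod_cast card_pos.mpr ⟨j, by simp⟩

theorem prod_erase_empiricalDist {d : ℕ} (z : Fin M → 𝒵) (zbar : Fin d → 𝒵) (u : Fin d) :
    ∏ i ∈ univ.erase u, empiricalDist z (zbar i)
      = 1 / (M : ℝ) ^ (d - 1) * ∏ i ∈ univ.erase u, (#{b | z b = zbar i} : ℝ) := by
  simp only [empiricalDist, prod_div_distrib, prod_const, card_erase_of_mem (mem_univ u),
    card_univ, Fintype.card_fin]
  ring

end EmpiricalDistribution

theorem arrival_rate_empirical_identity_general
    (𝒵 : Type*) [Fintype 𝒵] [DecidableEq 𝒵]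
    (M d : ℕ) (hM : 1 ≤ M)
    (z : Fin M → 𝒵)
    (Hz : 𝒵 → ℝ)
    (hHz : ∀ s, Hz s = ((Finset.univ.filter (fun j : Fin M => z j = s)).card : ℝ) / M)
    (h : (Fin d → 𝒵) → Fin d → ℝ) (j : Fin M) :
    (0 : ℝ) < 1 / M ∧ 1 / (M : ℝ) ≤ Hz (z j) ∧
    (1 / (M : ℝ) ^ (d - 1)) *
        ∑ k : Fin d, ∑ x : Fin d → Fin M,
          (if x k = j then (1 : ℝ) else 0) * h (z ∘ x) k
      = ∑ zbar : Fin d → 𝒵, ∑ u : Fin d,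
          (if zbar u = z j then (1 : ℝ) else 0) *
            (∏ i ∈ Finset.univ.erase u, Hz (zbar i)) * h zbar u ∧
    (∑ zbar : Fin d → 𝒵, ∑ u : Fin d,
          (if zbar u = z j then (1 : ℝ) else 0) *
            (∏ i ∈ Finset.univ.erase u, Hz (zbar i)) * h zbar u)
      = (1 / Hz (z j)) *
          ∑ zbar : Fin d → 𝒵, ∑ u : Fin d,
            (if zbar u = z j then (1 : ℝ) else 0) *
              (∏ i : Fin d, Hz (zbar i)) * h zbar u := by
  obtain rfl : Hz = empiricalDist z := funext hHz
  have hM_pos : (0 : ℝ) < 1 / M := by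
    have : (0 : ℝ) < M := by exact_mod_cast hM
    positivity
  have hHz_pos := hM_pos.trans_le (one_div_le_empiricalDist_self z j)
  refine ⟨hM_pos, one_div_le_empiricalDist_self z j, ?_, ?_⟩
  · conv_rhs => rw [sum_comm]
    rw [mul_sum]
    refine sum_congr rfl fun k _ => ?_
    rw [sum_ite_apply_eq_mul_comp z k j (fun zbar => h zbar k), mul_sum]
    refine sum_congr rfl fun zbar _ => ?_
    rw [prod_erase_empiricalDist]
    ring
  · rw [one_div_mul_eq_div, eq_div_iff hHz_pos.ne', mul_comm, mul_sum]
    refine sum_congr rfl fun zbar _ => ?_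
    rw [mul_sum]
    refine sum_congr rfl fun u _ => ?_
    rw [ite_mul_prod_eq_mul_ite_mul_prod_erase]
    ring

/-- The per-queue arrival-rate identity: the normalized count of agent
state-action pairs directing jobs to queue `j` equals an expression purely in
terms of the empirical queue-state distribution `Hz`. -/
theorem arrival_rate_empirical_identity
    (𝒵 : Type*) [Fintype 𝒵] [Nonempty 𝒵] [DecidableEq 𝒵]
    (M d : ℕ) (hM : 1 ≤ M) (hd : 1 ≤ d)
    (z : Fin M → 𝒵)
    (Hz : 𝒵 → ℝ)
    (hHz : ∀ s, Hz s = ((Finset.univ.filter (fun j : Fin M => z j = s)).card : ℝ) / M)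
    (h : (Fin d → 𝒵) → Fin d → ℝ) (j : Fin M) :
    (0 : ℝ) < 1 / M ∧ 1 / (M : ℝ) ≤ Hz (z j) ∧
    (1 / (M : ℝ) ^ (d - 1)) *
        ∑ k : Fin d, ∑ x : Fin d → Fin M,
          (if x k = j then (1 : ℝ) else 0) * h (z ∘ x) k
      = ∑ zbar : Fin d → 𝒵, ∑ u : Fin d,
          (if zbar u = z j then (1 : ℝ) else 0) *
            (∏ i ∈ Finset.univ.erase u, Hz (zbar i)) * h zbar u ∧
    (∑ zbar : Fin d → 𝒵, ∑ u : Fin d,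
          (if zbar u = z j then (1 : ℝ) else 0) *
            (∏ i ∈ Finset.univ.erase u, Hz (zbar i)) * h zbar u)
      = (1 / Hz (z j)) *
          ∑ zbar : Fin d → 𝒵, ∑ u : Fin d,
            (if zbar u = z j then (1 : ℝ) else 0) *
              (∏ i : Fin d, Hz (zbar i)) * h zbar u :=
  arrival_rate_empirical_identity_general 𝒵 M d hM z Hz hHz h j
end

section
/- Let Q be a real n×n matrix and r ∈ ℝⁿ. Define the (n+1)×(n+1) real matrix Q̄ whose top-left n×n block is Q, whose bottom row is (r₁, …, r_n, 0), and whose remaining entries (the first n entries of the last column) are 0. Then for every τ ∈ ℝ and every v ∈ ℝⁿ, exp(τ·Q̄) applied to the vector (v, 0) ∈ ℝ^{n+1} equals the vector whose first n coordinates are exp(τ·Q)·v and whose last coordinate is ∫₀^τ ⟨r, exp(s·Q)·v⟩ ds. -/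
/-!
As functions of `τ`, both sides solve the linear ODE `y' = Q̄ y` with `y 0 = (v, 0)`: the top
block of the right-hand side because the top-right block of `Q̄` vanishes, its last entry by the
fundamental theorem of calculus. Solutions of a Lipschitz ODE are unique.
-/

open Matrix NormedSpace

-- Any normed-algebra structure on matrices would do; one is needed for the derivative of `exp`.
attribute [local instance] Matrix.linftyOpNormedRing Matrix.linftyOpNormedAlgebra

theorem HasDerivAt.sum_elim {𝕜 F α β : Type*} [NontriviallyNormedField 𝕜] [NormedAddCommGroup F]
    [NormedSpace 𝕜 F] [Fintype α] [Fintype β] {f : 𝕜 → α → F} {g : 𝕜 → β → F}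
    {f' : α → F} {g' : β → F} {t : 𝕜} (hf : HasDerivAt f f' t) (hg : HasDerivAt g g' t) :
    HasDerivAt (fun u => Sum.elim (f u) (g u)) (Sum.elim f' g') t :=
  hasDerivAt_pi.2 (Sum.rec (hasDerivAt_pi.1 hf) (hasDerivAt_pi.1 hg))

section

variable {ι : Type*} [Fintype ι] [DecidableEq ι]

theorem hasDerivAt_exp_smul_mulVec (M : Matrix ι ι ℝ) (w : ι → ℝ) (t : ℝ) :
    HasDerivAt (fun u : ℝ => exp (u • M) *ᵥ w) (M *ᵥ (exp (t • M) *ᵥ w)) t := by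
  let applyTo : Matrix ι ι ℝ →L[ℝ] ι → ℝ :=
    LinearMap.toContinuousLinearMap ((LinearMap.applyₗ w).comp Matrix.toLin'.toLinearMap)
  exact (applyTo.hasFDerivAt.comp_hasDerivAt t (hasDerivAt_exp_smul_const' M t)).congr_deriv
    (mulVec_mulVec _ _ _).symm

theorem eq_exp_smul_mulVec_of_hasDerivAt {M : Matrix ι ι ℝ} {g : ℝ → ι → ℝ}
    (hg : ∀ t, HasDerivAt g (M *ᵥ g t) t) (t : ℝ) : g t = exp (t • M) *ᵥ g 0 := by
  have hM := (LinearMap.toContinuousLinearMap (Matrix.mulVecLin M)).lipschitz.lipschitzOnWith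
    (s := Set.univ)
  refine congrFun (ODE_solution_unique_univ (v := fun _ => (M *ᵥ ·)) (t₀ := 0)
    (fun _ => hM) (fun t => ⟨hg t, trivial⟩)
    (fun t => ⟨hasDerivAt_exp_smul_mulVec M (g 0) t, trivial⟩) ?_) t
  simp

end

theorem hasDerivAt_sum_elim_exp_smul_mulVec_integral {ι κ : Type*} [Fintype ι] [DecidableEq ι]
    [Fintype κ] (Q : Matrix ι ι ℝ) (r v : ι → ℝ) (t : ℝ) :
    HasDerivAt (fun t => Sum.elim (exp (t • Q) *ᵥ v)
        (fun _ : κ => ∫ s in (0 : ℝ)..t, r ⬝ᵥ exp (s • Q) *ᵥ v))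
      (fromBlocks Q 0 (replicateRow κ r) 0 *ᵥ Sum.elim (exp (t • Q) *ᵥ v)
        (fun _ : κ => ∫ s in (0 : ℝ)..t, r ⬝ᵥ exp (s • Q) *ᵥ v)) t := by
  have hcont : Continuous fun s : ℝ => r ⬝ᵥ exp (s • Q) *ᵥ v :=
    continuous_const.dotProduct
      (continuous_iff_continuousAt.2 fun s => (hasDerivAt_exp_smul_mulVec Q v s).continuousAt)
  simp only [fromBlocks_mulVec, Sum.elim_comp_inl, Sum.elim_comp_inr, zero_mulVec, add_zero,
    replicateRow_mulVec_eq_const]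
  exact (hasDerivAt_exp_smul_mulVec Q v t).sum_elim
    (hasDerivAt_pi.2 fun _ : κ => (hcont.integral_hasStrictDerivAt 0 t).hasDerivAt)

/-- Augmented-matrix identity for accumulated drops: if `Q̄` is the block
matrix with top-left block `Q`, bottom row `(r, 0)` and zeros elsewhere, then
`exp(τ Q̄) (v, 0)` has first `n` coordinates `exp(τ Q) v` and last coordinate
`∫₀^τ ⟨r, exp(s Q) v⟩ ds`. -/
theorem exp_augmented_block_matrix
    (n : ℕ) (Q : Matrix (Fin n) (Fin n) ℝ) (r : Fin n → ℝ)
    (Qbar : Matrix (Fin n ⊕ Unit) (Fin n ⊕ Unit) ℝ)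
    (hQbar : Qbar = Matrix.fromBlocks Q 0 (Matrix.replicateRow Unit r) 0)
    (τ : ℝ) (v : Fin n → ℝ) :
    (NormedSpace.exp (τ • Qbar)).mulVec (Sum.elim v fun _ => (0 : ℝ))
      = Sum.elim ((NormedSpace.exp (τ • Q)).mulVec v)
          (fun _ => ∫ s in (0 : ℝ)..τ, r ⬝ᵥ (NormedSpace.exp (s • Q)).mulVec v) := by
  subst hQbar
  simpa using (eq_exp_smul_mulVec_of_hasDerivAt
    (hasDerivAt_sum_elim_exp_smul_mulVec_integral Q r v) τ).symm
end
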